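/- Let H : ℝⁿ → ℝ be convex, twice continuously differentiable, and satisfy H(0) = 0, ∇H(0) = 0, and positive definiteness of the Hessian of H at 0 (i.e., ⟨v, D(∇H)(0) v⟩ > 0 for all v ≠ 0). Then every sublevel set of H is bounded: for every c ∈ ℝ, the set {x ∈ ℝⁿ : H(x) ≤ c} is bounded. -/

import Mathlib

open RealInnerProductSpace

/-- The gradient of a function on `ℝⁿ` (Euclidean space), via Mathlib's `gradient`. -/
noncomputable def grad {n : ℕ} (H : EuclideanSpace ℝ (Fin n) → ℝ) :
    EuclideanSpace ℝ (Fin n) → EuclideanSpace ℝ (Fin n) := gradient H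

/-!
Since `∇H(0) = 0`, the convex function `H` attains its minimum `0` at the origin. If `H` vanished
at some `x ≠ 0`, convexity would make every point of the segment `[0, x]` a minimiser, so `∇H`
would vanish along that segment and the Hessian at `0` would kill `x`, contradicting positive
definiteness. Hence `H > 0` away from `0`, and `H` has a positive minimum `m` on the unit sphere.
Convexity and `H(0) = 0` give `H(x / ‖x‖) ≤ H(x) / ‖x‖` for `‖x‖ ≥ 1`, so `H(x) ≥ m ‖x‖` there,
which bounds every sublevel set.
-/

open Set Gradient

section

variable {E F : Type*} [NormedAddCommGroup E] [NormedSpace ℝ E]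
  [NormedAddCommGroup F] [NormedSpace ℝ F]

theorem HasFDerivAt.apply_sub_eq_zero_of_eqOn_segment {g : E → F} {g' : E →L[ℝ] F} {a b : E}
    (hg : HasFDerivAt g g' a) (hv : ∀ x ∈ segment ℝ a b, g x = 0) : g' (b - a) = 0 := by
  have hline : ∀ t ∈ Icc (0 : ℝ) 1, g (AffineMap.lineMap a b t) = 0 := fun t ht =>
    hv _ (segment_eq_image_lineMap ℝ a b ▸ mem_image_of_mem _ ht)
  have hderiv :
      HasDerivWithinAt (g ∘ AffineMap.lineMap (k := ℝ) a b) (g' (b - a)) (Icc 0 1) 0 := by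
    refine (HasFDerivAt.comp_hasDerivAt (0 : ℝ) ?_ AffineMap.hasDerivAt_lineMap).hasDerivWithinAt
    simpa using hg
  have hzero : HasDerivWithinAt (g ∘ AffineMap.lineMap (k := ℝ) a b) 0 (Icc 0 1) 0 :=
    (hasDerivWithinAt_const _ _ (0 : F)).congr hline (hline 0 ⟨le_rfl, zero_le_one⟩)
  exact (uniqueDiffOn_Icc_zero_one 0 ⟨le_rfl, zero_le_one⟩).eq_deriv _ hderiv hzero

theorem ConvexOn.isMinOn_of_hasFDerivAt_eq_zero {f : E → ℝ} {a : E} (hf : ConvexOn ℝ univ f)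
    (hd : HasFDerivAt f (0 : E →L[ℝ] ℝ) a) : IsMinOn f univ a := by
  intro y _
  have hφ : ConvexOn ℝ univ (f ∘ AffineMap.lineMap (k := ℝ) a y) := hf.comp_affineMap _
  have hφ' : HasDerivAt (f ∘ AffineMap.lineMap (k := ℝ) a y) 0 0 := by
    have := HasFDerivAt.comp_hasDerivAt (0 : ℝ) (by simpa using hd)
      (AffineMap.hasDerivAt_lineMap (a := a) (b := y) (x := (0 : ℝ)))
    simpa using this
  simpa [slope] using hφ.le_slope_of_hasDerivAt (mem_univ 0) (mem_univ 1) one_pos hφ'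

theorem ConvexOn.map_smul_le {f : E → ℝ} {s : Set E} {x : E} {t : ℝ} (hf : ConvexOn ℝ s f)
    (h0 : (0 : E) ∈ s) (hx : x ∈ s) (hf0 : f 0 ≤ 0) (ht₀ : 0 ≤ t) (ht₁ : t ≤ 1) :
    f (t • x) ≤ t * f x := by
  have := hf.2 hx h0 ht₀ (sub_nonneg.2 ht₁) (add_sub_cancel t 1)
  simp only [smul_zero, add_zero, smul_eq_mul] at this
  linarith [mul_nonpos_of_nonneg_of_nonpos (sub_nonneg.2 ht₁) hf0]

end

section

variable {F : Type*} [NormedAddCommGroup F] [InnerProductSpace ℝ F] [CompleteSpace F]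

theorem ContDiff.gradient {f : F → ℝ} {m n : WithTop ℕ∞} (hf : ContDiff ℝ n f)
    (hmn : m + 1 ≤ n) : ContDiff ℝ m (∇ f) :=
  (InnerProductSpace.toDual ℝ F).symm.contDiff.comp (hf.fderiv_right hmn)

theorem ConvexOn.lt_map_of_hasFDerivAt_gradient {f : F → ℝ} {f'' : F →L[ℝ] F} {a x : F}
    (hf : ConvexOn ℝ univ f) (hmin : IsMinOn f univ a) (hf'' : HasFDerivAt (∇ f) f'' a)
    (hpos : ∀ v ≠ 0, 0 < ⟪v, f'' v⟫) (hx : x ≠ a) : f a < f x := by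
  by_contra! hle
  have hseg : ∀ y ∈ segment ℝ a x, ∇ f y = 0 := by
    intro y hy
    have hy_le : y ∈ {z ∈ univ | f z ≤ f a} :=
      (hf.convex_le (f a)).segment_subset ⟨mem_univ a, le_rfl⟩ ⟨mem_univ x, hle⟩ hy
    have hy_min : IsMinOn f univ y := fun z _ => hy_le.2.trans (hmin (mem_univ z))
    simp [gradient, (hy_min.isLocalMin Filter.univ_mem).fderiv_eq_zero]
  have := hpos (x - a) (sub_ne_zero.2 hx)
  rw [hf''.apply_sub_eq_zero_of_eqOn_segment hseg, inner_zero_right] at this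
  exact lt_irrefl _ this

end

section

variable {E : Type*} [NormedAddCommGroup E] [NormedSpace ℝ E] [ProperSpace E]

theorem ConvexOn.exists_pos_mul_norm_le {f : E → ℝ} (hf : ConvexOn ℝ univ f)
    (hcont : Continuous f) (hf0 : f 0 ≤ 0) (hpos : ∀ x ≠ 0, 0 < f x) :
    ∃ m > 0, ∀ x, 1 ≤ ‖x‖ → m * ‖x‖ ≤ f x := by
  obtain ⟨m, hm, hmin⟩ := (isCompact_sphere (0 : E) 1).exists_forall_le' hcont.continuousOn
    fun y hy => hpos y (Metric.ne_of_mem_sphere hy one_ne_zero)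
  refine ⟨m, hm, fun x hx => ?_⟩
  have hx0 : 0 < ‖x‖ := one_pos.trans_le hx
  have hsph : ‖x‖⁻¹ • x ∈ Metric.sphere (0 : E) 1 := by simp [norm_smul, hx0.ne']
  calc m * ‖x‖ ≤ f (‖x‖⁻¹ • x) * ‖x‖ := mul_le_mul_of_nonneg_right (hmin _ hsph) hx0.le
    _ ≤ ‖x‖⁻¹ * f x * ‖x‖ := by
      gcongr
      exact hf.map_smul_le (mem_univ 0) (mem_univ x) hf0 (by positivity)
        (inv_le_one_of_one_le₀ hx)
    _ = f x := by field_simp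

theorem ConvexOn.isBounded_setOf_le {f : E → ℝ} (hf : ConvexOn ℝ univ f)
    (hcont : Continuous f) (hf0 : f 0 ≤ 0) (hpos : ∀ x ≠ 0, 0 < f x) (c : ℝ) :
    Bornology.IsBounded {x | f x ≤ c} := by
  obtain ⟨m, hm, hlin⟩ := hf.exists_pos_mul_norm_le hcont hf0 hpos
  refine (Metric.isBounded_closedBall (x := 0) (r := max 1 (c / m))).subset fun x hx => ?_
  rw [mem_closedBall_zero_iff]
  rcases le_total ‖x‖ 1 with h | h
  · exact h.trans (le_max_left _ _)
  · exact ((le_div_iff₀' hm).2 ((hlin x h).trans hx)).trans (le_max_right _ _)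

end

/-- A convex, twice continuously differentiable function `H` with
`H(0) = 0`, `∇H(0) = 0`, and positive definite Hessian at `0` has bounded sublevel
sets: for every `c` there exists `C` with `‖x‖ ≤ C` whenever `H(x) ≤ c`. -/
theorem convex_hamiltonian_bounded_sublevel_sets {n : ℕ}
    (H : EuclideanSpace ℝ (Fin n) → ℝ)
    (hconv : ConvexOn ℝ Set.univ H)
    (hsmooth : ContDiff ℝ 2 H)
    (h0 : H 0 = 0)
    (hgrad0 : grad H 0 = 0)
    (hhess : ∀ v : EuclideanSpace ℝ (Fin n), v ≠ 0 → 0 < ⟪v, fderiv ℝ (grad H) 0 v⟫) :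
    ∀ c : ℝ, ∃ C : ℝ, ∀ x : EuclideanSpace ℝ (Fin n), H x ≤ c → ‖x‖ ≤ C := by
  intro c
  have hmin : IsMinOn H univ 0 := by
    refine hconv.isMinOn_of_hasFDerivAt_eq_zero ?_
    have := (hsmooth.differentiable two_ne_zero 0).hasGradientAt.hasFDerivAt
    rwa [← grad, hgrad0, map_zero] at this
  have hgrad_deriv : HasFDerivAt (∇ H) (fderiv ℝ (grad H) 0) 0 :=
    ((hsmooth.gradient (by norm_num)).differentiable one_ne_zero 0).hasFDerivAt
  have hpos : ∀ x ≠ 0, 0 < H x := fun x hx =>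
    h0 ▸ hconv.lt_map_of_hasFDerivAt_gradient hmin hgrad_deriv hhess hx
  exact isBounded_iff_forall_norm_le.1 (hconv.isBounded_setOf_le hsmooth.continuous h0.le hpos c)
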